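/- Suppose condition A1 holds and there exists M > 0 with ‖c(x)‖ < M for all x. If lim_{‖x‖→∞} ∫_{R(x) ∩ In(x)} q(x,y) dy = 0, where In(x) = {y : ‖y‖ ≤ ‖x‖}, then C₁ := limsup_{‖x‖→∞} ∫_{R(x)} q(x,y)(1 − α(x,y)) dy = 0. -/

import Mathlib

open MeasureTheory Filter

noncomputable section

abbrev Ed (d : ℕ) := EuclideanSpace ℝ (Fin d)

variable {d : ℕ}

/-- The quadratic form `vᵀ M v`. -/
def quadForm (M : Matrix (Fin d) (Fin d) ℝ) (v : Ed d) : ℝ :=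
  ∑ i, ∑ j, v i * M i j * v j

/-- A matrix acting on a Euclidean vector. -/
def mvec (M : Matrix (Fin d) (Fin d) ℝ) (v : Ed d) : Ed d :=
  (WithLp.equiv 2 (Fin d → ℝ)).symm (M.mulVec (WithLp.equiv 2 (Fin d → ℝ) v))

/-- Gaussian proposal density with mean `c x` and covariance `h • G x`. -/
def mhq (h : ℝ) (c : Ed d → Ed d) (G : Ed d → Matrix (Fin d) (Fin d) ℝ)
    (x y : Ed d) : ℝ :=
  (2 * Real.pi * h) ^ (-(d : ℝ) / 2) * (G x).det ^ (-(1 : ℝ) / 2) *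
    Real.exp (-quadForm (G x)⁻¹ (y - c x) / (2 * h))

/-- Metropolis–Hastings acceptance probability. -/
def mhAccept (f : Ed d → ℝ) (q : Ed d → Ed d → ℝ) (x y : Ed d) : ℝ :=
  min 1 (f y * q y x / (f x * q x y))

/-- Metropolis–Hastings rejection probability. -/
def mhRej (f : Ed d → ℝ) (q : Ed d → Ed d → ℝ) (x : Ed d) : ℝ :=
  1 - ∫ y, mhAccept f q x y * q x y

/-- The Metropolis–Hastings transition kernel. -/
def mhKernel (f : Ed d → ℝ) (q : Ed d → Ed d → ℝ) (x : Ed d) : Measure (Ed d) :=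
  volume.withDensity (fun y => ENNReal.ofReal (mhAccept f q x y * q x y)) +
    ENNReal.ofReal (mhRej f q x) • Measure.dirac x

/-- The `n`-step kernel. -/
def iterKernel (P : Ed d → Measure (Ed d)) : ℕ → Ed d → Measure (Ed d)
  | 0, x => Measure.dirac x
  | n + 1, x => (P x).bind (iterKernel P n)

/-- The target probability measure with density `f`. -/
def targetMeasure (f : Ed d → ℝ) : Measure (Ed d) :=
  volume.withDensity fun x => ENNReal.ofReal (f x)

/-- Geometric ergodicity of the chain `P` with target `F`. -/
def GeomErgodic (P : Ed d → Measure (Ed d)) (F : Measure (Ed d)) : Prop :=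
  ∃ (L : Ed d → ℝ) (ρ : ℝ), (∀ x, 0 ≤ L x) ∧ 0 < ρ ∧ ρ < 1 ∧
    ∀ (n : ℕ) (x : Ed d) (A : Set (Ed d)), MeasurableSet A →
      |(iterKernel P n x A).toReal - (F A).toReal| ≤ L x * ρ ^ n

/-- Potential rejection region. -/
def rejSet (f : Ed d → ℝ) (q : Ed d → Ed d → ℝ) (x : Ed d) : Set (Ed d) :=
  {y | f y * q y x < f x * q x y}

/-- The filter of `‖x‖ → ∞`. -/
def normAtTop (d : ℕ) : Filter (Ed d) := Filter.comap (fun x => ‖x‖) Filter.atTop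

/-- The constant `C₁`. -/
def C1const (f : Ed d → ℝ) (q : Ed d → Ed d → ℝ) : ℝ :=
  limsup (fun x => ∫ y in rejSet f q x, q x y * (1 - mhAccept f q x y)) (normAtTop d)

/-- The constant `C₂(s)`. -/
def C2const (d : ℕ) (h s : ℝ) (G₁ G₂ : Matrix (Fin d) (Fin d) ℝ) : ℝ :=
  h ^ (-(d : ℝ) / 2) * (Real.pi / 2) ^ (((d : ℝ) - 2) / 2) *
    (G₂.det / G₁.det) ^ ((1 : ℝ) / 2) * Real.exp (h * s ^ 2 / 2) *
    ∫ r in Set.Ioi (0 : ℝ), Real.exp (-(r - h * s) ^ 2 / (2 * h)) * r ^ ((d : ℝ) - 1)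

/-- Loewner order. -/
def LoewnerLE (A B : Matrix (Fin d) (Fin d) ℝ) : Prop := (B - A).PosSemidef

/-- A2 : bounded on bounded sets. -/
def BddOnBounded (c : Ed d → Ed d) : Prop :=
  ∀ M : ℝ, ∃ K : ℝ, ∀ x : Ed d, ‖x‖ ≤ M → ‖c x‖ ≤ K

/-- `f` is bounded away from `0` and `∞` on compact sets. -/
def BddAwayOnCompacts (f : Ed d → ℝ) : Prop :=
  ∀ K : Set (Ed d), IsCompact K → ∃ a b : ℝ, 0 < a ∧ ∀ x ∈ K, a ≤ f x ∧ f x ≤ b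

/-!
Since `0 ≤ α ≤ 1`, the integrand `q (1 - α)` is at most `q`, and on `R(x) ∩ In(x)` the mass of
`q` vanishes by hypothesis. Outside `In(x)` we use a Gaussian envelope
`q(x, y) ≤ C exp(-ε ‖y‖²)` uniform in `x`: `G(x) ≥ G₁` bounds `det G(x)` below, `G(x) ≤ G₂`
bounds the form of `G(x)⁻¹` below (by Cauchy–Schwarz), and `‖c(x)‖ < M` controls the shift.
The envelope's mass on `{‖y‖ > ‖x‖}` tends to `0`.
-/

section QuadraticForm

open Matrix

lemma quadForm_eq_dotProduct (M : Matrix (Fin d) (Fin d) ℝ) (v : Ed d) :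
    quadForm M v = v.ofLp ⬝ᵥ (M *ᵥ v.ofLp) := by
  simp only [quadForm, dotProduct, mulVec, Finset.mul_sum]
  exact Finset.sum_congr rfl fun i _ => Finset.sum_congr rfl fun j _ => by ring

lemma dotProduct_self_eq_norm_sq (v : Ed d) : v.ofLp ⬝ᵥ v.ofLp = ‖v‖ ^ 2 := by
  rw [EuclideanSpace.norm_eq, Real.sq_sqrt (by positivity)]
  simp [dotProduct, sq]

lemma quadForm_nonneg {A : Matrix (Fin d) (Fin d) ℝ} (hA : A.PosSemidef) (v : Ed d) :
    0 ≤ quadForm A v := by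
  simpa [quadForm_eq_dotProduct] using hA.dotProduct_mulVec_nonneg v.ofLp

lemma quadForm_le_of_loewnerLE {A B : Matrix (Fin d) (Fin d) ℝ} (hAB : LoewnerLE A B)
    (v : Ed d) : quadForm A v ≤ quadForm B v := by
  have := hAB.dotProduct_mulVec_nonneg v.ofLp
  simp only [star_trivial, sub_mulVec, dotProduct_sub, sub_nonneg] at this
  simpa only [quadForm_eq_dotProduct] using this

lemma quadForm_le_mul_norm_sq (M : Matrix (Fin d) (Fin d) ℝ) (v : Ed d) :
    quadForm M v ≤ (∑ i, ∑ j, |M i j|) * ‖v‖ ^ 2 := by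
  rw [quadForm, Finset.sum_mul]
  refine Finset.sum_le_sum fun i _ => ?_
  rw [Finset.sum_mul]
  refine Finset.sum_le_sum fun j _ => ?_
  have hi : |v i| ≤ ‖v‖ := PiLp.norm_apply_le v i
  have hj : |v j| ≤ ‖v‖ := PiLp.norm_apply_le v j
  calc v i * M i j * v j ≤ |v i * M i j * v j| := le_abs_self _
    _ = |M i j| * (|v i| * |v j|) := by rw [abs_mul, abs_mul]; ring
    _ ≤ |M i j| * (‖v‖ * ‖v‖) := by gcongr
    _ = |M i j| * ‖v‖ ^ 2 := by ring

lemma exists_quadForm_le_mul_norm_sq (M : Matrix (Fin d) (Fin d) ℝ) :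
    ∃ b > 0, ∀ v : Ed d, quadForm M v ≤ b * ‖v‖ ^ 2 :=
  ⟨∑ i, ∑ j, |M i j| + 1, by positivity, fun v =>
    (quadForm_le_mul_norm_sq M v).trans (by gcongr; linarith)⟩

lemma norm_sq_le_mul_quadForm_inv {A : Matrix (Fin d) (Fin d) ℝ} (hA : A.PosDef) {b : ℝ}
    (hb : ∀ v, quadForm A v ≤ b * ‖v‖ ^ 2) (v : Ed d) : ‖v‖ ^ 2 ≤ b * quadForm A⁻¹ v := by
  rcases eq_or_ne v 0 with rfl | hv
  · simp [quadForm]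
  set u := v.ofLp
  set w := A⁻¹ *ᵥ u
  have hAt : Aᵀ = A := by rw [← conjTranspose_eq_transpose_of_trivial]; exact hA.isHermitian
  have hAw : A *ᵥ w = u := by
    rw [mulVec_mulVec, mul_nonsing_inv _ (isUnit_iff_ne_zero.mpr hA.det_pos.ne'), one_mulVec]
  have hwAu : w ⬝ᵥ (A *ᵥ u) = u ⬝ᵥ u := by
    rw [dotProduct_mulVec, ← mulVec_transpose, hAt, hAw]
  -- Cauchy–Schwarz for the form `(x, y) ↦ x ⬝ᵥ A *ᵥ y`, applied to `u` and `w = A⁻¹ u`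
  have hcs := LinearMap.BilinForm.apply_mul_apply_le_of_forall_zero_le (toLinearMap₂' ℝ A)
    (fun x => by simpa [toLinearMap₂'_apply'] using hA.posSemidef.dotProduct_mulVec_nonneg x) u w
  simp only [toLinearMap₂'_apply', hAw, hwAu] at hcs
  rw [dotProduct_comm w, ← quadForm_eq_dotProduct, ← quadForm_eq_dotProduct,
    dotProduct_self_eq_norm_sq] at hcs
  have hn : 0 < ‖v‖ ^ 2 := by positivity
  have hinv := quadForm_nonneg hA.inv.posSemidef v
  refine le_of_mul_le_mul_left ?_ hn
  calc ‖v‖ ^ 2 * ‖v‖ ^ 2 ≤ quadForm A v * quadForm A⁻¹ v := hcs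
    _ ≤ b * ‖v‖ ^ 2 * quadForm A⁻¹ v := by gcongr; exact hb v
    _ = ‖v‖ ^ 2 * (b * quadForm A⁻¹ v) := by ring

lemma inv_pow_le_det {A : Matrix (Fin d) (Fin d) ℝ} (hA : A.PosDef) {b : ℝ} (hb : 0 < b)
    (h : ∀ v, ‖v‖ ^ 2 ≤ b * quadForm A v) : (b ^ d)⁻¹ ≤ A.det := by
  have herm := hA.isHermitian
  rw [herm.det_eq_prod_eigenvalues, ← inv_pow, ← Fin.prod_const]
  refine Finset.prod_le_prod (fun _ _ => by positivity) fun i _ => ?_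
  have he : herm.eigenvalues i = quadForm A (herm.eigenvectorBasis i) := by
    simp [herm.eigenvalues_eq i, quadForm_eq_dotProduct]
  have h1 := h (herm.eigenvectorBasis i)
  rw [herm.eigenvectorBasis.orthonormal.1 i, ← he] at h1
  rw [inv_le_iff_one_le_mul₀' hb]
  simpa using h1

lemma exists_norm_sq_le_mul_quadForm {A : Matrix (Fin d) (Fin d) ℝ} (hA : A.PosDef) :
    ∃ b > 0, ∀ v : Ed d, ‖v‖ ^ 2 ≤ b * quadForm A v := by
  obtain ⟨b, hb, hle⟩ := exists_quadForm_le_mul_norm_sq A⁻¹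
  refine ⟨b, hb, fun v => ?_⟩
  simpa [nonsing_inv_nonsing_inv _ (isUnit_iff_ne_zero.mpr hA.det_pos.ne')] using
    norm_sq_le_mul_quadForm_inv hA.inv hle v

end QuadraticForm

lemma integrable_exp_neg_mul_norm_sq {V : Type*} [NormedAddCommGroup V] [InnerProductSpace ℝ V]
    [FiniteDimensional ℝ V] [MeasurableSpace V] [BorelSpace V] {b : ℝ} (hb : 0 < b) :
    Integrable fun v : V => Real.exp (-b * ‖v‖ ^ 2) := by
  have := (GaussianFourier.integrable_cexp_neg_mul_sq_norm_add (V := V)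
    (b := b) (by simpa using hb) 0 0).norm
  refine this.congr (Eventually.of_forall fun v => ?_)
  simp only [Complex.norm_exp]
  rw [zero_mul, add_zero, ← Complex.ofReal_pow, ← Complex.ofReal_neg, ← Complex.ofReal_mul,
    Complex.ofReal_re]

lemma tendsto_setIntegral_norm_gt_atTop {E : Type*} [NormedAddCommGroup E] [MeasurableSpace E]
    [OpensMeasurableSpace E] {μ : Measure E} {g : E → ℝ} (hg : Integrable g μ) :
    Tendsto (fun r : ℝ => ∫ y in {y | r < ‖y‖}, g y ∂μ) atTop (nhds 0) := by
  have hmeas (r : ℝ) : MeasurableSet {y : E | r < ‖y‖} :=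
    measurableSet_lt measurable_const measurable_norm
  simp_rw [← integral_indicator (hmeas _)]
  rw [← integral_zero E ℝ]
  refine tendsto_integral_filter_of_dominated_convergence (fun y => ‖g y‖)
    (Eventually.of_forall fun r => hg.aestronglyMeasurable.indicator (hmeas r))
    (Eventually.of_forall fun r => Eventually.of_forall fun y => ?_) hg.norm
    (Eventually.of_forall fun y => ?_)
  · exact norm_indicator_le_norm_self g y
  · refine tendsto_const_nhds.congr' ?_
    filter_upwards [eventually_ge_atTop ‖y‖] with r hr
    exact (Set.indicator_of_notMem (s := {y : E | r < ‖y‖}) (not_lt.mpr hr) g).symm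

lemma setIntegral_le_setIntegral_inter_add_setIntegral_compl {α : Type*} [MeasurableSpace α]
    {μ : Measure α} {R S : Set α} (hS : MeasurableSet S) {φ q g : α → ℝ}
    (hφ : ∀ y, 0 ≤ φ y) (hφq : ∀ y, φ y ≤ q y) (hqg : ∀ y, q y ≤ g y) (hq : Integrable q μ)
    (hg : Integrable g μ) :
    ∫ y in R, φ y ∂μ ≤ ∫ y in R ∩ S, q y ∂μ + ∫ y in Sᶜ, g y ∂μ := by
  calc ∫ y in R, φ y ∂μ ≤ ∫ y in R, q y ∂μ :=
        integral_mono_of_nonneg (Eventually.of_forall hφ) hq.integrableOn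
          (Eventually.of_forall hφq)
    _ = ∫ y in R ∩ S, q y ∂μ + ∫ y in R \ S, q y ∂μ :=
        (integral_inter_add_sdiff hS hq.integrableOn).symm
    _ ≤ ∫ y in R ∩ S, q y ∂μ + ∫ y in Sᶜ, g y ∂μ := by
        gcongr
        calc ∫ y in R \ S, q y ∂μ ≤ ∫ y in R \ S, g y ∂μ :=
              setIntegral_mono hq.integrableOn hg.integrableOn hqg
          _ ≤ ∫ y in Sᶜ, g y ∂μ :=
              setIntegral_mono_set hg.integrableOn
                (Eventually.of_forall fun y => (hφ y).trans ((hφq y).trans (hqg y)))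
                (Set.sdiff_subset_compl _ _).eventuallyLE

section Proposal

variable {h : ℝ} {c : Ed d → Ed d} {G : Ed d → Matrix (Fin d) (Fin d) ℝ}

lemma mhq_nonneg (hh : 0 ≤ h) (hG : ∀ x, 0 ≤ (G x).det) (x y : Ed d) : 0 ≤ mhq h c G x y := by
  unfold mhq
  have := Real.rpow_nonneg (hG x) (-(1 : ℝ) / 2)
  have := Real.rpow_nonneg (by positivity : 0 ≤ 2 * Real.pi * h) (-(d : ℝ) / 2)
  positivity

lemma continuous_mhq (x : Ed d) : Continuous (mhq h c G x) := by
  unfold mhq quadForm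
  fun_prop

lemma mhq_le_gaussian (hh : 0 < h) {δ b M : ℝ} (hδ : 0 < δ) (hb : 0 < b)
    (hdet : ∀ x, δ ≤ (G x).det) (hinv : ∀ x v, ‖v‖ ^ 2 ≤ b * quadForm (G x)⁻¹ v)
    (hM : ∀ x, ‖c x‖ ≤ M) (x y : Ed d) :
    mhq h c G x y ≤ (2 * Real.pi * h) ^ (-(d : ℝ) / 2) * δ ^ (-(1 : ℝ) / 2) *
      Real.exp (M ^ 2 / (2 * h * b)) * Real.exp (-(4 * h * b)⁻¹ * ‖y‖ ^ 2) := by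
  set Q := quadForm (G x)⁻¹ (y - c x)
  have hy : ‖y‖ ^ 2 ≤ 2 * b * Q + 2 * M ^ 2 := by
    have h1 : ‖y‖ ≤ ‖y - c x‖ + ‖c x‖ := norm_le_norm_sub_add y (c x)
    have h2 := hinv x (y - c x)
    have h3 : ‖c x‖ ^ 2 ≤ M ^ 2 := pow_le_pow_left₀ (norm_nonneg _) (hM x) 2
    nlinarith [sq_nonneg (‖y - c x‖ - ‖c x‖), norm_nonneg y]
  have hexp : -Q / (2 * h) ≤ M ^ 2 / (2 * h * b) + -(4 * h * b)⁻¹ * ‖y‖ ^ 2 := by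
    have key : M ^ 2 / (2 * h * b) + -(4 * h * b)⁻¹ * ‖y‖ ^ 2 - -Q / (2 * h)
        = (2 * b * Q + 2 * M ^ 2 - ‖y‖ ^ 2) / (4 * h * b) := by
      field_simp
      ring
    have : 0 ≤ (2 * b * Q + 2 * M ^ 2 - ‖y‖ ^ 2) / (4 * h * b) :=
      div_nonneg (by linarith) (by positivity)
    linarith
  rw [mul_assoc _ (Real.exp _), ← Real.exp_add]
  unfold mhq
  refine mul_le_mul (mul_le_mul_of_nonneg_left ?_ (by positivity)) (Real.exp_le_exp.mpr hexp)
    (Real.exp_pos _).le (by positivity)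
  exact Real.rpow_le_rpow_of_nonpos hδ (hdet x) (by norm_num)

lemma exists_integrable_bound_mhq (hh : 0 < h) (hGpd : ∀ x, (G x).PosDef)
    {G₁ G₂ : Matrix (Fin d) (Fin d) ℝ} (hG₁ : G₁.PosDef)
    (hA1 : ∀ x, LoewnerLE G₁ (G x) ∧ LoewnerLE (G x) G₂) {M : ℝ} (hM : ∀ x, ‖c x‖ ≤ M) :
    ∃ g : Ed d → ℝ, Integrable g ∧ ∀ x y, mhq h c G x y ≤ g y := by
  obtain ⟨b₁, hb₁, hlow⟩ := exists_norm_sq_le_mul_quadForm hG₁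
  obtain ⟨b₂, hb₂, hupp⟩ := exists_quadForm_le_mul_norm_sq G₂
  have hdet x : (b₁ ^ d)⁻¹ ≤ (G x).det := inv_pow_le_det (hGpd x) hb₁ fun v =>
    (hlow v).trans (mul_le_mul_of_nonneg_left (quadForm_le_of_loewnerLE (hA1 x).1 v) hb₁.le)
  have hinv x v : ‖v‖ ^ 2 ≤ b₂ * quadForm (G x)⁻¹ v := norm_sq_le_mul_quadForm_inv (hGpd x)
    (fun v => (quadForm_le_of_loewnerLE (hA1 x).2 v).trans (hupp v)) v
  exact ⟨_, (integrable_exp_neg_mul_norm_sq (by positivity)).const_mul _,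
    mhq_le_gaussian hh (by positivity) hb₂ hdet hinv hM⟩

end Proposal

section Acceptance

variable {f : Ed d → ℝ} {q : Ed d → Ed d → ℝ}

lemma mhAccept_le_one (x y : Ed d) : mhAccept f q x y ≤ 1 := min_le_left _ _

lemma mhAccept_nonneg (hf : ∀ x, 0 ≤ f x) (hq : ∀ x y, 0 ≤ q x y) (x y : Ed d) :
    0 ≤ mhAccept f q x y :=
  le_min zero_le_one (div_nonneg (mul_nonneg (hf y) (hq y x)) (mul_nonneg (hf x) (hq x y)))

end Acceptance

lemma limsup_eq_zero_of_tendsto {α : Type*} {l : Filter α} {u : α → ℝ}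
    (hu : Tendsto u l (nhds 0)) : limsup u l = 0 := by
  rcases l.eq_or_neBot with rfl | _
  -- `limsup u ⊥ = sInf univ`, which is `0` in `ℝ`
  · simp [limsup, limsSup]
  · exact hu.limsup_eq

theorem C1_eq_zero_of_inwards_general
    (d : ℕ) (h : ℝ) (hh : 0 < h)
    (f : Ed d → ℝ) (hfpos : ∀ x, 0 < f x)
    (c : Ed d → Ed d)
    (G : Ed d → Matrix (Fin d) (Fin d) ℝ)
    (hGpd : ∀ x, (G x).PosDef)
    (G₁ G₂ : Matrix (Fin d) (Fin d) ℝ) (hG₁ : G₁.PosDef)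
    -- A1
    (hA1 : ∀ x, LoewnerLE G₁ (G x) ∧ LoewnerLE (G x) G₂)
    -- the proposal mean is uniformly bounded
    (M : ℝ) (hM : ∀ x, ‖c x‖ < M)
    -- the inward rejection mass vanishes at infinity
    (hin : Tendsto
      (fun x => ∫ y in rejSet f (mhq h c G) x ∩ {y : Ed d | ‖y‖ ≤ ‖x‖}, mhq h c G x y)
      (normAtTop d) (nhds 0)) :
    C1const f (mhq h c G) = 0 := by
  obtain ⟨g, hg, hqg⟩ := exists_integrable_bound_mhq hh hGpd hG₁ hA1 fun x => (hM x).le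
  set q := mhq h c G
  have hq0 : ∀ x y, 0 ≤ q x y := mhq_nonneg hh.le fun x => (hGpd x).det_pos.le
  have hα0 := mhAccept_nonneg (fun x => (hfpos x).le) hq0
  have hφ0 x y : 0 ≤ q x y * (1 - mhAccept f q x y) :=
    mul_nonneg (hq0 x y) (sub_nonneg.mpr (mhAccept_le_one x y))
  have hq x : Integrable (q x) := hg.mono' (continuous_mhq x).aestronglyMeasurable
    (Eventually.of_forall fun y => by rw [Real.norm_of_nonneg (hq0 x y)]; exact hqg x y)
  have hsplit x : ∫ y in rejSet f q x, q x y * (1 - mhAccept f q x y) ≤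
      (∫ y in rejSet f q x ∩ {y | ‖y‖ ≤ ‖x‖}, q x y) + ∫ y in {y | ‖x‖ < ‖y‖}, g y := by
    simpa only [Set.compl_ofPred, not_le] using
      setIntegral_le_setIntegral_inter_add_setIntegral_compl
        (measurableSet_le measurable_norm measurable_const) (hφ0 x)
        (fun y => mul_le_of_le_one_right (hq0 x y) (sub_le_self _ (hα0 x y))) (hqg x) (hq x) hg
  have htail : Tendsto (fun x => ∫ y in {y | ‖x‖ < ‖y‖}, g y) (normAtTop d) (nhds 0) :=
    (tendsto_setIntegral_norm_gt_atTop hg).comp tendsto_comap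
  exact limsup_eq_zero_of_tendsto (squeeze_zero (fun x => integral_nonneg (hφ0 x)) hsplit
    (by simpa using hin.add htail))

/-- Remark 2 (convergence inwards): under A1 and a uniformly bounded proposal mean,
if the mass that the proposal puts on the inward part of the rejection region
vanishes as `‖x‖ → ∞`, then `C₁ = 0`. -/
theorem C1_eq_zero_of_inwards
    (d : ℕ) (h : ℝ) (hh : 0 < h)
    (f : Ed d → ℝ) (hfpos : ∀ x, 0 < f x) (hfmeas : Measurable f)
    (c : Ed d → Ed d) (hcmeas : Measurable c)
    (G : Ed d → Matrix (Fin d) (Fin d) ℝ)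
    (hGmeas : ∀ i j, Measurable fun x => G x i j)
    (hGpd : ∀ x, (G x).PosDef)
    (G₁ G₂ : Matrix (Fin d) (Fin d) ℝ) (hG₁ : G₁.PosDef) (hG₂ : G₂.PosDef)
    -- A1
    (hA1 : ∀ x, LoewnerLE G₁ (G x) ∧ LoewnerLE (G x) G₂)
    -- the proposal mean is uniformly bounded
    (M : ℝ) (hM : ∀ x, ‖c x‖ < M)
    -- the inward rejection mass vanishes at infinity
    (hin : Tendsto
      (fun x => ∫ y in rejSet f (mhq h c G) x ∩ {y : Ed d | ‖y‖ ≤ ‖x‖}, mhq h c G x y)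
      (normAtTop d) (nhds 0)) :
    C1const f (mhq h c G) = 0 :=
  C1_eq_zero_of_inwards_general d h hh f hfpos c G hGpd G₁ G₂ hG₁ hA1 M hM hin
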